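/- arXiv:2502.10538 — 2 statements merged into one kernel-verified Lean document; each statement's English description precedes it below -/
import Mathlib

section
/- For any constants ε ≤ 1/3 and δ ≤ 1/9, the Hadamard code with the shared-query decoder recovering κ = 2 bits is a (3/2, 2, δ, ε)-amortized LDC: it recovers any 2 requested message bits with 3 queries and failure probability at most 3δ ≤ ε. -/
/-!
If `ỹ` is correct at both `S` and `S ∆ {j}`, then `ỹ S + ỹ (S ∆ {j}) = x j`, because in
characteristic two the common part of the two sums cancels. As `S` ranges over all subsets, so
does `S ∆ {j}`; hence each of the three queries `S`, `S ∆ {j₁}`, `S ∆ {j₂}` hits a corrupted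
position for at most `δ 2ᵏ` choices of `S`, and the decoder fails on at most `3 δ 2ᵏ` of them.
-/

open Finset
open scoped symmDiff

theorem CharTwo.sum_symmDiff {ι R : Type*} [DecidableEq ι] [CommRing R] [CharP R 2]
    (f : ι → R) (s t : Finset ι) :
    ∑ i ∈ s ∆ t, f i = ∑ i ∈ s, f i + ∑ i ∈ t, f i := by
  have h_sdiff := sum_sdiff (f := f) (inter_subset_union : s ∩ t ⊆ s ∪ t)
  have h_union := sum_union_inter (s₁ := s) (s₂ := t) (f := f)
  rw [symmDiff_eq_sup_sdiff_inf]
  linear_combination h_sdiff + h_union - (∑ i ∈ s ∩ t, f i) * CharTwo.two_eq_zero (R := R)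

section Hadamard

variable {ι R : Type*} [DecidableEq ι] [CommRing R] [CharP R 2]

theorem hadamard_decode_eq {x : ι → R} {y : Finset ι → R} {S : Finset ι} {j : ι}
    (hS : y S = ∑ i ∈ S, x i) (hSj : y (S ∆ {j}) = ∑ i ∈ S ∆ {j}, x i) :
    y S + y (S ∆ {j}) = x j := by
  rw [hS, hSj, CharTwo.sum_symmDiff, sum_singleton, ← add_assoc, CharTwo.add_self_eq_zero,
    zero_add]

theorem card_hadamard_decode_fail_le [Fintype ι] [DecidableEq R] (x : ι → R)
    (y : Finset ι → R) (Q : Finset ι) :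
    #{S | ¬ ∀ j ∈ Q, y S + y (S ∆ {j}) = x j} ≤ (#Q + 1) * #{T | y T ≠ ∑ i ∈ T, x i} := by
  set B : Finset (Finset ι) := {T | y T ≠ ∑ i ∈ T, x i}
  have h_subset : ({S | ¬ ∀ j ∈ Q, y S + y (S ∆ {j}) = x j} : Finset (Finset ι)) ⊆
      B ∪ Q.biUnion fun j => B.image fun T => T ∆ {j} := by
    intro S hS
    simp only [mem_filter_univ, not_forall] at hS
    obtain ⟨j, hj, hfail⟩ := hS
    by_cases hS : y S = ∑ i ∈ S, x i
    · have hSj : S ∆ {j} ∈ B := by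
        simpa [B] using fun hSj => hfail (hadamard_decode_eq hS hSj)
      exact mem_union_right _ <|
        mem_biUnion.2 ⟨j, hj, mem_image.2 ⟨S ∆ {j}, hSj, symmDiff_symmDiff_cancel_right _ _⟩⟩
    · exact mem_union_left _ (by simpa [B] using hS)
  calc #{S | ¬ ∀ j ∈ Q, y S + y (S ∆ {j}) = x j}
      ≤ #B + ∑ j ∈ Q, #(B.image fun T => T ∆ {j}) :=
        (card_le_card h_subset).trans ((card_union_le _ _).trans (add_le_add le_rfl card_biUnion_le))
    _ ≤ #B + ∑ _j ∈ Q, #B := add_le_add le_rfl (sum_le_sum fun _ _ => card_image_le)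
    _ = (#Q + 1) * #B := by rw [sum_const, smul_eq_mul]; ring

end Hadamard

theorem Finset.card_insert_image_symmDiff_singleton {ι : Type*} [DecidableEq ι]
    (S Q : Finset ι) : #(insert S (Q.image fun j => S ∆ {j})) = #Q + 1 := by
  have h_notMem : S ∉ Q.image fun j => S ∆ {j} := by
    simp [symmDiff_eq_left]
  rw [card_insert_of_notMem h_notMem, card_image_of_injective]
  intro a b hab
  simpa using symmDiff_right_injective S hab

theorem hadamard_is_3_2_aLDC_general (k : ℕ) (δ ε : ℝ)
    (hεδ : 3 * δ ≤ ε) (x : Fin k → ZMod 2) (ytilde : Finset (Fin k) → ZMod 2)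
    (hclose : ((Finset.univ.filter
        (fun T : Finset (Fin k) => ytilde T ≠ ∑ j ∈ T, x j)).card : ℝ) ≤ δ * 2 ^ k)
    (Q : Finset (Fin k)) (hQ : Q.card = 2) :
    (∀ S : Finset (Fin k),
      (insert S (Q.image (fun j => symmDiff S {j}))).card = 3) ∧
    (1 - 3 * δ) * 2 ^ k ≤
      ((Finset.univ.filter (fun S : Finset (Fin k) =>
          ∀ j ∈ Q, ytilde S + ytilde (symmDiff S {j}) = x j)).card : ℝ) ∧
    (1 - ε) * 2 ^ k ≤
      ((Finset.univ.filter (fun S : Finset (Fin k) =>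
          ∀ j ∈ Q, ytilde S + ytilde (symmDiff S {j}) = x j)).card : ℝ) := by
  have h_split := card_filter_add_card_filter_not (s := (univ : Finset (Finset (Fin k))))
    fun S => ∀ j ∈ Q, ytilde S + ytilde (S ∆ {j}) = x j
  rw [card_univ, Fintype.card_finset, Fintype.card_fin] at h_split
  have h_fail : #{S | ¬ ∀ j ∈ Q, ytilde S + ytilde (S ∆ {j}) = x j} ≤
      3 * #{T | ytilde T ≠ ∑ j ∈ T, x j} := by
    simpa [hQ] using card_hadamard_decode_fail_le x ytilde Q
  have h_success : (1 - 3 * δ) * 2 ^ k ≤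
      (#{S | ∀ j ∈ Q, ytilde S + ytilde (S ∆ {j}) = x j} : ℝ) := by
    have h_split' := congrArg (Nat.cast : ℕ → ℝ) h_split
    have h_fail' := Nat.cast_le (α := ℝ) |>.2 h_fail
    push_cast at h_split' h_fail'
    linarith
  refine ⟨fun S => by rw [card_insert_image_symmDiff_singleton, hQ], h_success, ?_⟩
  exact le_trans (by gcongr) h_success

/-- The Hadamard code with the shared-query decoder recovering `κ = 2` bits is a
`(3/2, 2, δ, ε)`-amortized LDC for constants `ε ≤ 1/3`, `δ ≤ 1/9` (with the
parameter relation `ε ≥ (κ+1)δ = 3δ`): for any received word `ỹ` that is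
`δ`-close to the Hadamard encoding of `x` and any query set `Q` of size `2`, the
decoder makes `3 = (3/2)·2` queries and recovers both requested bits with
probability at least `1 − 3δ ≥ 1 − ε`. -/
theorem hadamard_is_3_2_aLDC (k : ℕ) (δ ε : ℝ) (hε : ε ≤ 1 / 3) (hδ : δ ≤ 1 / 9)
    (hεδ : 3 * δ ≤ ε) (x : Fin k → ZMod 2) (ytilde : Finset (Fin k) → ZMod 2)
    (hclose : ((Finset.univ.filter
        (fun T : Finset (Fin k) => ytilde T ≠ ∑ j ∈ T, x j)).card : ℝ) ≤ δ * 2 ^ k)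
    (Q : Finset (Fin k)) (hQ : Q.card = 2) :
    (∀ S : Finset (Fin k),
      (insert S (Q.image (fun j => symmDiff S {j}))).card = 3) ∧
    (1 - 3 * δ) * 2 ^ k ≤
      ((Finset.univ.filter (fun S : Finset (Fin k) =>
          ∀ j ∈ Q, ytilde S + ytilde (symmDiff S {j}) = x j)).card : ℝ) ∧
    (1 - ε) * 2 ^ k ≤
      ((Finset.univ.filter (fun S : Finset (Fin k) =>
          ∀ j ∈ Q, ytilde S + ytilde (symmDiff S {j}) = x j)).card : ℝ) :=
  hadamard_is_3_2_aLDC_general k δ ε hεδ x ytilde hclose Q hQ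
end

section
/- One-time pad with random permutation randomizes adversarial errors: let y' ∈ {0,1}^N, let π be a uniformly random permutation of [N] and r a uniformly random string in {0,1}^N, and set y = π(y') ⊕ r. For any function (adversary) mapping y to an error vector e of Hamming weight at most δN, the set of corrupted positions, pulled back through π to positions of y', is distributed as a uniformly random subset of [N] of the corresponding size, independent of y'. -/
section Aux

variable {N : ℕ} (y' : Fin N → Bool) (Adv : (Fin N → Bool) → Finset (Fin N))

private def cond' (T : Finset (Fin N)) (pr : Equiv.Perm (Fin N) × (Fin N → Bool)) : Prop :=
  (Adv (fun i => xor (y' (pr.1.symm i)) (pr.2 i))).image pr.1.symm = T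

private def Φ (σ : Equiv.Perm (Fin N)) (pr : Equiv.Perm (Fin N) × (Fin N → Bool)) :
    Equiv.Perm (Fin N) × (Fin N → Bool) :=
  (σ.trans pr.1, fun i => xor (pr.2 i) (xor (y' (pr.1.symm i)) (y' (σ.symm (pr.1.symm i)))))

private lemma y_eq (σ : Equiv.Perm (Fin N)) (pr : Equiv.Perm (Fin N) × (Fin N → Bool)) :
    (fun i => xor (y' ((Φ y' σ pr).1.symm i)) ((Φ y' σ pr).2 i))
      = fun i => xor (y' (pr.1.symm i)) (pr.2 i) := by
  funext i
  simp only [Φ, Equiv.symm_trans_apply, Equiv.symm_symm, Equiv.apply_symm_apply]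
  cases y' (σ.symm (pr.1.symm i)) <;> cases y' (pr.1.symm i) <;> cases pr.2 i <;> rfl

private lemma Φ_inv (σ : Equiv.Perm (Fin N)) (pr : Equiv.Perm (Fin N) × (Fin N → Bool)) :
    Φ y' σ.symm (Φ y' σ pr) = pr := by
  have h1 : (Φ y' σ pr).1 = σ.trans pr.1 := rfl
  refine Prod.ext ?_ ?_
  · ext x; simp [Φ]
  · funext i
    simp only [Φ, Equiv.symm_trans_apply, Equiv.symm_symm, Equiv.apply_symm_apply]
    cases y' (σ.symm (pr.1.symm i)) <;> cases y' (pr.1.symm i) <;> cases pr.2 i <;> rfl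

instance instDecCond (T : Finset (Fin N)) : DecidablePred (cond' y' Adv T) :=
  fun pr => by unfold cond'; infer_instance

private lemma Φ_cond (σ : Equiv.Perm (Fin N)) (T : Finset (Fin N))
    (pr : Equiv.Perm (Fin N) × (Fin N → Bool)) (h : cond' y' Adv T pr) :
    cond' y' Adv (T.image σ.symm) (Φ y' σ pr) := by
  unfold cond' at h ⊢
  rw [y_eq]
  have : ((Φ y' σ pr).1.symm : Fin N → Fin N) = σ.symm ∘ pr.1.symm := by
    funext i; rfl
  rw [this, ← Finset.image_image, h]

private lemma card_filter_eq (σ : Equiv.Perm (Fin N)) (T : Finset (Fin N)) :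
    (Finset.univ.filter (cond' y' Adv T)).card
      = (Finset.univ.filter (cond' y' Adv (T.image σ.symm))).card := by
  refine Finset.card_bij' (fun pr _ => Φ y' σ pr) (fun pr _ => Φ y' σ.symm pr) ?_ ?_ ?_ ?_
  · intro pr hpr
    simp only [Finset.mem_filter, Finset.mem_univ, true_and] at hpr ⊢
    exact Φ_cond y' Adv σ T pr hpr
  · intro pr hpr
    simp only [Finset.mem_filter, Finset.mem_univ, true_and] at hpr ⊢
    have := Φ_cond y' Adv σ.symm (T.image σ.symm) pr hpr
    rwa [Finset.image_image, show (σ.symm.symm ∘ σ.symm : Fin N → Fin N) = id from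
      funext (fun x => σ.apply_symm_apply x), Finset.image_id] at this
  · intro pr _; exact Φ_inv y' σ pr
  · intro pr _
    have := Φ_inv y' σ.symm pr
    rwa [Equiv.symm_symm] at this

end Aux

/-- One-time pad with a random permutation randomizes adversarial errors: fix
`y' ∈ {0,1}^N`, let `π` be a uniformly random permutation of `[N]` and `r` a
uniformly random string, and set `y = π(y') ⊕ r` (where `π(y')_i = y'(π⁻¹ i)`).
For any adversary `Adv` mapping the observed word `y` to a set of `w` corrupted
positions (`w ≤ δN`), the pullback through `π` of the corrupted set is uniform
over `w`-element subsets of `[N]`, independently of `y'`: for every `w`-set `T`,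
the fraction of pairs `(π, r)` for which the pullback equals `T` is exactly
`1 / (N choose w)`. -/
theorem permuted_otp_randomizes_errors (N w : ℕ) (hw : w ≤ N)
    (y' : Fin N → Bool)
    (Adv : (Fin N → Bool) → Finset (Fin N))
    (hAdv : ∀ y, (Adv y).card = w)
    (T : Finset (Fin N)) (hT : T.card = w) :
    ((Finset.univ.filter (fun pr : Equiv.Perm (Fin N) × (Fin N → Bool) =>
        (Adv (fun i => xor (y' (pr.1.symm i)) (pr.2 i))).image pr.1.symm = T)).card : ℚ)
      * (N.choose w)
      = Fintype.card (Equiv.Perm (Fin N) × (Fin N → Bool)) := by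
  -- constant over all w-sets
  have const : ∀ T' : Finset (Fin N), T'.card = w →
      (Finset.univ.filter (cond' y' Adv T')).card
        = (Finset.univ.filter (cond' y' Adv T)).card := by
    intro T' hT'
    have e : (T' : Finset (Fin N)) ≃ (T : Finset (Fin N)) := by
      apply Finset.equivOfCardEq; rw [hT, hT']
    set σ : Equiv.Perm (Fin N) := Equiv.extendSubtype e with hσ
    have himg : T'.image σ = T := by
      apply Finset.eq_of_subset_of_card_le
      · intro x hx
        simp only [Finset.mem_image] at hx
        obtain ⟨a, ha, rfl⟩ := hx
        exact Equiv.extendSubtype_mem e a ha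
      · rw [hT, Finset.card_image_of_injective _ σ.injective, hT']
    have himg' : T.image σ.symm = T' := by
      rw [← himg, Finset.image_image,
        show (σ.symm ∘ σ : Fin N → Fin N) = id from funext (fun x => σ.symm_apply_apply x),
        Finset.image_id]
    rw [← himg', ← card_filter_eq y' Adv σ T]
  -- fiberwise partition
  have fib : (Finset.univ : Finset (Equiv.Perm (Fin N) × (Fin N → Bool))).card
      = ∑ T' ∈ Finset.powersetCard w (Finset.univ : Finset (Fin N)),
          (Finset.univ.filter (cond' y' Adv T')).card := by
    have h := Finset.card_eq_sum_card_fiberwise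
      (f := fun pr : Equiv.Perm (Fin N) × (Fin N → Bool) =>
        (Adv (fun i => xor (y' (pr.1.symm i)) (pr.2 i))).image pr.1.symm)
      (s := Finset.univ) (t := Finset.powersetCard w (Finset.univ : Finset (Fin N)))
      (fun pr _ => by
        simp only [Finset.mem_coe]
        rw [Finset.mem_powersetCard_univ,
          Finset.card_image_of_injective _ pr.1.symm.injective, hAdv])
    rw [h]
    exact Finset.sum_congr rfl (fun T' _ => by
      apply Finset.card_bij (fun pr _ => pr) <;> simp [cond'])
  have hsum : ∑ T' ∈ Finset.powersetCard w (Finset.univ : Finset (Fin N)),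
      (Finset.univ.filter (cond' y' Adv T')).card
      = (Finset.univ.filter (cond' y' Adv T)).card * N.choose w := by
    rw [Finset.sum_congr rfl (fun T' hT' => const T' (Finset.mem_powersetCard_univ.mp hT')),
      Finset.sum_const, smul_eq_mul, mul_comm, Finset.card_powersetCard, Finset.card_univ,
      Fintype.card_fin]
  have key : (Finset.univ.filter (cond' y' Adv T)).card * N.choose w
      = Fintype.card (Equiv.Perm (Fin N) × (Fin N → Bool)) := by
    rw [← hsum, ← fib, Finset.card_univ]
  have : (Finset.univ.filter (fun pr : Equiv.Perm (Fin N) × (Fin N → Bool) =>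
        (Adv (fun i => xor (y' (pr.1.symm i)) (pr.2 i))).image pr.1.symm = T)).card * N.choose w
      = Fintype.card (Equiv.Perm (Fin N) × (Fin N → Bool)) := key
  exact_mod_cast this
end
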